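/- The full subcategory of derived f-complete R-modules is an abelian subcategory of R-modules closed under kernels, cokernels, and extensions. -/

import Mathlib

universe u

/-- An `R`-module `M` is derived `f`-complete if `Hom_R(R[1/f], M) = 0` and
`Ext¹_R(R[1/f], M) = 0`. -/
def IsDerivedFComplete (R : Type u) [CommRing R] (f : R)
    (M : Type u) [AddCommGroup M] [Module R M] : Prop :=
  Subsingleton (Localization.Away f →ₗ[R] M) ∧
    Subsingleton (((Ext R (ModuleCat.{u} R) 1).obj
      (Opposite.op (ModuleCat.of R (Localization.Away f)))).obj (ModuleCat.of R M))

/-!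
`R[1/f]` has the free resolution `0 → R^(ℕ) → R^(ℕ) → R[1/f] → 0` given by
`eₙ ↦ eₙ - f • eₙ₊₁` and `eₙ ↦ 1 / fⁿ`. Applying `Hom_R(-, M)` to it identifies
`Hom_R(R[1/f], M)` and `Ext¹_R(R[1/f], M)` with the kernel and the cokernel of the endomorphism
`u ↦ (uₙ - f • uₙ₊₁)ₙ` of `M^ℕ`, so `M` is derived `f`-complete exactly when this endomorphism
is bijective. It is natural in `M` and `M ↦ M^ℕ` is exact, so the five lemma shows that
bijectivity passes to kernels, cokernels and extensions.
-/

namespace CategoryTheory.ShortComplex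

open Limits ZeroObject

variable {C : Type*} [Category* C] [Abelian C] {S : ShortComplex C}

noncomputable def resolutionX (S : ShortComplex C) : ℕ → C
  | 0 => S.X₂
  | 1 => S.X₁
  | _ + 2 => 0

noncomputable def resolutionD (S : ShortComplex C) :
    ∀ n, S.resolutionX (n + 1) ⟶ S.resolutionX n
  | 0 => S.f
  | _ + 1 => 0

noncomputable def resolutionComplex (S : ShortComplex C) : ChainComplex C ℕ :=
  ChainComplex.of S.resolutionX S.resolutionD fun n => by cases n <;> exact zero_comp

lemma resolutionComplex_d_one_zero : S.resolutionComplex.d 1 0 = S.f :=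
  ChainComplex.of_d S.resolutionX S.resolutionD 0

noncomputable def resolutionπ (S : ShortComplex C) :
    S.resolutionComplex ⟶ (ChainComplex.single₀ C).obj S.X₃ :=
  (ChainComplex.toSingle₀Equiv _ _).symm ⟨S.g, by rw [resolutionComplex_d_one_zero]; exact S.zero⟩

lemma resolutionπ_f_zero : S.resolutionπ.f 0 = S.g :=
  ChainComplex.toSingle₀Equiv_symm_apply_f_zero _ _

namespace ShortExact

variable [Projective S.X₁] [Projective S.X₂]

noncomputable def projectiveResolution (hS : S.ShortExact) : ProjectiveResolution S.X₃ where
  complex := S.resolutionComplex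
  projective n := by
    rcases n with _ | _ | n
    · exact inferInstanceAs (Projective S.X₂)
    · exact inferInstanceAs (Projective S.X₁)
    · exact inferInstanceAs (Projective (0 : C))
  π := S.resolutionπ
  quasiIso := ⟨fun n => by
    rcases n with _ | n
    · rw [ChainComplex.quasiIsoAt₀_iff, ShortComplex.quasiIso_iff_of_zeros' _ rfl rfl rfl]
      refine ⟨?_, ?_⟩
      · refine ShortComplex.exact_of_iso (ShortComplex.isoMk (Iso.refl S.X₁) (Iso.refl S.X₂)
          (Iso.refl S.X₃) ?_ ?_) hS.exact
        · exact (Category.id_comp _).trans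
            (resolutionComplex_d_one_zero.trans (Category.comp_id _).symm)
        · exact (Category.id_comp _).trans (resolutionπ_f_zero.trans (Category.comp_id _).symm)
      · show Epi (S.resolutionπ.f 0)
        rw [resolutionπ_f_zero]
        exact hS.epi_g
    · rw [quasiIsoAt_iff_exactAt' _ _ (ChainComplex.exactAt_succ_single_obj _ _),
        HomologicalComplex.exactAt_iff' _ (n + 2) (n + 1) n (by simp) (by simp)]
      rcases n with _ | n
      · refine (ShortComplex.exact_iff_mono _ (ChainComplex.of_d _ _ 1)).2 ?_
        show Mono (S.resolutionComplex.d 1 0)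
        rw [resolutionComplex_d_one_zero]
        exact hS.mono_f
      · exact ShortComplex.exact_of_isZero_X₂ _ (isZero_zero C)⟩

variable (R : Type*) [Ring R] [Linear R C] [EnoughProjectives C]

lemma subsingleton_ext_one_iff (hS : S.ShortExact) (Y : C) :
    Subsingleton (((Ext R C 1).obj (Opposite.op S.X₃)).obj Y) ↔
      Function.Surjective (fun φ : S.X₂ ⟶ Y => S.f ≫ φ) := by
  let K := S.resolutionComplex.linearYonedaObj R Y
  have hK₂ : IsZero (K.X 2) :=
    ModuleCat.isZero_iff_subsingleton.2 ⟨fun a b => (isZero_zero C).eq_of_src a b⟩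
  rw [← ModuleCat.isZero_iff_subsingleton,
    Iso.isZero_iff (hS.projectiveResolution.isoExt 1 Y),
    ← HomologicalComplex.exactAt_iff_isZero_homology,
    HomologicalComplex.exactAt_iff' _ 0 1 2 (by simp) (by simp),
    ShortComplex.exact_iff_epi _ (hK₂.eq_of_tgt _ _), ModuleCat.epi_iff_surjective]
  exact iff_of_eq (congrArg _ (funext fun φ => congrArg (· ≫ φ) resolutionComplex_d_one_zero))

end ShortExact
end CategoryTheory.ShortComplex

section AwayResolution

open Finsupp

variable {R : Type*} [CommRing R] (f : R)

noncomputable def awayRelations : (ℕ →₀ R) →ₗ[R] (ℕ →₀ R) :=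
  LinearMap.id - f • lmapDomain R R Nat.succ

variable (S : Type*) [CommRing S] [Algebra R S] [IsLocalization.Away f S]

noncomputable def awayGenerators : (ℕ →₀ R) →ₗ[R] S :=
  linearCombination R (IsLocalization.Away.invSelf (S := S) f ^ ·)

variable {f S}

lemma awayRelations_single (n : ℕ) (r : R) :
    awayRelations f (single n r) = single n r - single (n + 1) (f * r) := by
  simp [awayRelations, mapDomain_single, smul_single]

lemma awayRelations_apply_zero (x : ℕ →₀ R) : awayRelations f x 0 = x 0 := by
  simp [awayRelations, mapDomain_of_notMem_range]

lemma awayRelations_apply_succ (x : ℕ →₀ R) (n : ℕ) :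
    awayRelations f x (n + 1) = x (n + 1) - f * x n := by
  simp [awayRelations, mapDomain_apply Nat.succ_injective]

lemma awayRelations_injective : Function.Injective (awayRelations f) := by
  refine (injective_iff_map_eq_zero _).2 fun x hx => Finsupp.ext fun n => ?_
  induction n with
  | zero => simpa [awayRelations_apply_zero] using DFunLike.congr_fun hx 0
  | succ n ih =>
    simpa [awayRelations_apply_succ, ih, sub_eq_zero] using DFunLike.congr_fun hx (n + 1)

lemma awayGenerators_single (n : ℕ) (r : R) :
    awayGenerators f S (single n r) = r • IsLocalization.Away.invSelf f ^ n :=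
  linearCombination_single _ _ _

lemma awayGenerators_surjective : Function.Surjective (awayGenerators f S) := by
  intro z
  obtain ⟨n, a, h⟩ := IsLocalization.Away.surj f z
  refine ⟨single n a, ?_⟩
  rw [awayGenerators_single, Algebra.smul_def, ← h, mul_assoc, ← mul_pow,
    IsLocalization.Away.mul_invSelf, one_pow, mul_one]

variable (f) in
lemma single_sub_single_mem_range_awayRelations (n k : ℕ) (r : R) :
    single n r - single (n + k) (f ^ k * r) ∈ LinearMap.range (awayRelations f) := by
  induction k with
  | zero => simp
  | succ k ih =>
    have h := Submodule.add_mem _ ih (LinearMap.mem_range_self _ (single (n + k) (f ^ k * r)))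
    rwa [awayRelations_single, sub_add_sub_cancel, ← mul_assoc, ← pow_succ'] at h

variable (f) in
lemma exists_sub_single_mem_range_awayRelations (x : ℕ →₀ R) :
    ∃ n a, x - single n a ∈ LinearMap.range (awayRelations f) := by
  induction x using Finsupp.induction_linear with
  | zero => exact ⟨0, 0, by simp⟩
  | single n a => exact ⟨n, a, by simp⟩
  | add x y hx hy =>
    obtain ⟨n, a, hx⟩ := hx
    obtain ⟨m, b, hy⟩ := hy
    refine ⟨n + m, f ^ m * a + f ^ n * b, ?_⟩
    have h := Submodule.add_mem _ (Submodule.add_mem _ hx hy) (Submodule.add_mem _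
      (single_sub_single_mem_range_awayRelations f n m a)
      (single_sub_single_mem_range_awayRelations f m n b))
    convert h using 1
    rw [add_comm m n, single_add]
    abel

lemma awayGenerators_comp_awayRelations : awayGenerators f S ∘ₗ awayRelations f = 0 := by
  refine lhom_ext fun n r => ?_
  simp only [LinearMap.comp_apply, awayRelations_single, map_sub, awayGenerators_single,
    Algebra.smul_def, map_mul, pow_succ, LinearMap.zero_apply]
  linear_combination -(algebraMap R S r * IsLocalization.Away.invSelf f ^ n) *
    IsLocalization.Away.mul_invSelf (S := S) f

lemma exists_pow_mul_eq_zero_of_awayGenerators_single {n : ℕ} {a : R}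
    (h : awayGenerators f S (single n a) = 0) : ∃ k, f ^ k * a = 0 := by
  have ha : algebraMap R S a = algebraMap R S 0 := by
    rw [awayGenerators_single, Algebra.smul_def] at h
    calc algebraMap R S a
        = algebraMap R S a * IsLocalization.Away.invSelf f ^ n * algebraMap R S f ^ n := by
          rw [mul_assoc, ← mul_pow, mul_comm _ (algebraMap R S f),
            IsLocalization.Away.mul_invSelf, one_pow, mul_one]
      _ = algebraMap R S 0 := by rw [h, zero_mul, map_zero]
  simpa using IsLocalization.Away.exists_of_eq f ha

lemma exact_awayRelations_awayGenerators :
    Function.Exact (awayRelations f) (awayGenerators f S) := by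
  refine LinearMap.exact_iff.2 (le_antisymm (fun x hx => ?_)
    (LinearMap.range_le_ker_iff.2 awayGenerators_comp_awayRelations))
  obtain ⟨n, a, hxa⟩ := exists_sub_single_mem_range_awayRelations f x
  have hD : ∀ y ∈ LinearMap.range (awayRelations f), awayGenerators f S y = 0 := by
    rintro _ ⟨y, rfl⟩
    exact LinearMap.congr_fun awayGenerators_comp_awayRelations y
  have hna : awayGenerators f S (single n a) = 0 := by
    rw [← sub_sub_cancel x (single n a), map_sub, hx, hD _ hxa, sub_zero]
  obtain ⟨k, hk⟩ := exists_pow_mul_eq_zero_of_awayGenerators_single hna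
  have hmem := single_sub_single_mem_range_awayRelations f n k a
  rw [hk, single_zero, sub_zero] at hmem
  simpa using Submodule.add_mem _ hxa hmem

end AwayResolution

section SubSMulShift

variable {R : Type*} [CommRing R] (f : R) (M : Type*) [AddCommGroup M] [Module R M]

noncomputable def subSMulShift : (ℕ → M) →ₗ[R] (ℕ → M) :=
  LinearMap.id - f • LinearMap.funLeft R M Nat.succ

variable {M}

@[simp]
lemma subSMulShift_apply (u : ℕ → M) (n : ℕ) : subSMulShift f M u n = u n - f • u (n + 1) := rfl

lemma compLeft_comp_subSMulShift {N : Type*} [AddCommGroup N] [Module R N] (g : M →ₗ[R] N) :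
    g.compLeft ℕ ∘ₗ subSMulShift f M = subSMulShift f N ∘ₗ g.compLeft ℕ := by
  ext u n
  simp

variable (M)

lemma lcomp_awayRelations_comp_llift :
    LinearMap.lcomp R M (awayRelations f) ∘ₗ (Finsupp.llift M R R ℕ).toLinearMap =
      (Finsupp.llift M R R ℕ).toLinearMap ∘ₗ subSMulShift f M := by
  refine LinearMap.ext fun u => Finsupp.lhom_ext fun n r => ?_
  simp only [LinearMap.comp_apply, LinearEquiv.coe_coe, LinearMap.lcomp_apply,
    awayRelations_single, map_sub, Finsupp.llift_apply, Finsupp.lift_apply, zero_smul,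
    Finsupp.sum_single_index, subSMulShift_apply, smul_sub, sub_self, mul_smul, smul_comm r f]

lemma injective_lcomp_awayRelations_iff :
    Function.Injective (LinearMap.lcomp R M (awayRelations f)) ↔
      Function.Injective (subSMulShift f M) := by
  rw [← EquivLike.comp_injective _ (Finsupp.llift M R R ℕ),
    ← EquivLike.injective_comp (Finsupp.llift M R R ℕ)]
  exact iff_of_eq (congrArg _ (congrArg DFunLike.coe (lcomp_awayRelations_comp_llift f M)))

lemma surjective_lcomp_awayRelations_iff :
    Function.Surjective (LinearMap.lcomp R M (awayRelations f)) ↔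
      Function.Surjective (subSMulShift f M) := by
  rw [← EquivLike.comp_surjective _ (Finsupp.llift M R R ℕ),
    ← EquivLike.surjective_comp (Finsupp.llift M R R ℕ)]
  exact iff_of_eq (congrArg _ (congrArg DFunLike.coe (lcomp_awayRelations_comp_llift f M)))

end SubSMulShift

lemma Function.Exact.subsingleton_iff_injective {R A B C : Type*} [Semiring R] [AddCommGroup A]
    [AddCommGroup B] [AddCommGroup C] [Module R A] [Module R B] [Module R C]
    {a : A →ₗ[R] B} {b : B →ₗ[R] C} (h : Function.Exact a b) (ha : Function.Injective a) :
    Subsingleton A ↔ Function.Injective b := by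
  refine ⟨fun _ => (injective_iff_map_eq_zero b).2 fun y hy => ?_,
    fun hb => ⟨fun x y => ha (hb ?_)⟩⟩
  · obtain ⟨x, rfl⟩ := (h y).1 hy
    rw [Subsingleton.elim x 0, map_zero]
  · rw [h.apply_apply_eq_zero, h.apply_apply_eq_zero]

lemma Function.Exact.compLeft {R M₁ M₂ M₃ : Type*} [Semiring R] [AddCommGroup M₁]
    [AddCommGroup M₂] [AddCommGroup M₃] [Module R M₁] [Module R M₂] [Module R M₃]
    {g₁ : M₁ →ₗ[R] M₂} {g₂ : M₂ →ₗ[R] M₃} (h : Function.Exact g₁ g₂) (ι : Type*) :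
    Function.Exact (g₁.compLeft ι) (g₂.compLeft ι) := by
  refine fun v => ⟨fun hv => ?_, ?_⟩
  · choose u hu using fun i => (h (v i)).1 (congrFun hv i)
    exact ⟨u, funext hu⟩
  · rintro ⟨u, rfl⟩
    exact funext fun i => h.apply_apply_eq_zero (u i)

section DerivedComplete

variable {R : Type u} [CommRing R] (f : R) (S : Type u) [CommRing S] [Algebra R S]
  [IsLocalization.Away f S] (M : Type u) [AddCommGroup M] [Module R M]

lemma subsingleton_linearMap_iff_injective_subSMulShift :
    Subsingleton (S →ₗ[R] M) ↔ Function.Injective (subSMulShift f M) := by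
  rw [← injective_lcomp_awayRelations_iff]
  exact (LinearMap.exact_lcomp_of_exact_of_surjective M exact_awayRelations_awayGenerators
    (awayGenerators_surjective (S := S))).subsingleton_iff_injective
    (LinearMap.lcomp_injective_of_surjective _ awayGenerators_surjective)

lemma subsingleton_ext_one_iff_surjective_subSMulShift :
    Subsingleton (((Ext R (ModuleCat.{u} R) 1).obj
      (Opposite.op (ModuleCat.of R S))).obj (ModuleCat.of R M)) ↔
      Function.Surjective (subSMulShift f M) := by
  have hS := ModuleCat.shortComplex_shortExact
    (ModuleCat.shortComplexOfCompEqZero _ _ (awayGenerators_comp_awayRelations (f := f) (S := S)))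
    exact_awayRelations_awayGenerators awayRelations_injective awayGenerators_surjective
  rw [hS.subsingleton_ext_one_iff R, ← surjective_lcomp_awayRelations_iff,
    ← EquivLike.comp_surjective _ ModuleCat.homEquiv,
    ← EquivLike.surjective_comp ModuleCat.homEquiv.symm]
  rfl

lemma isDerivedFComplete_iff_bijective_subSMulShift :
    IsDerivedFComplete R f M ↔ Function.Bijective (subSMulShift f M) :=
  and_congr (subsingleton_linearMap_iff_injective_subSMulShift f _ M)
    (subsingleton_ext_one_iff_surjective_subSMulShift f _ M)

end DerivedComplete

/-- The derived `f`-complete `R`-modules form an abelian subcategory of the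
category of `R`-modules: they are closed under kernels, cokernels, and
extensions. -/
theorem derived_f_complete_closed_ker_coker_extensions
    (R : Type u) [CommRing R] (f : R) :
    (∀ (M N : Type u) [AddCommGroup M] [Module R M] [AddCommGroup N] [Module R N]
        (g : M →ₗ[R] N), IsDerivedFComplete R f M → IsDerivedFComplete R f N →
        IsDerivedFComplete R f (LinearMap.ker g)) ∧
    (∀ (M N : Type u) [AddCommGroup M] [Module R M] [AddCommGroup N] [Module R N]
        (g : M →ₗ[R] N), IsDerivedFComplete R f M → IsDerivedFComplete R f N →
        IsDerivedFComplete R f (N ⧸ LinearMap.range g)) ∧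
    (∀ (A B C : Type u) [AddCommGroup A] [Module R A] [AddCommGroup B] [Module R B]
        [AddCommGroup C] [Module R C] (i : A →ₗ[R] B) (π : B →ₗ[R] C),
        Function.Injective i → Function.Surjective π → Function.Exact i π →
        IsDerivedFComplete R f A → IsDerivedFComplete R f C →
        IsDerivedFComplete R f B) := by
  simp only [isDerivedFComplete_iff_bijective_subSMulShift]
  refine ⟨fun M N _ _ _ _ g hM hN => ?_, fun M N _ _ _ _ g hM hN => ?_,
    fun A B C _ _ _ _ _ _ i π hi hπ hiπ hA hC => ?_⟩
  · have hexact := (LinearMap.exact_subtype_ker_map g).compLeft ℕ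
    exact LinearMap.bijective_of_bijective_of_injective_of_left_exact _ _ _ _ _ _ _
      (compLeft_comp_subSMulShift f _) (compLeft_comp_subSMulShift f _) hexact hexact hM hN.1
      Subtype.val_injective.comp_left Subtype.val_injective.comp_left
  · have hexact := (LinearMap.exact_map_mkQ_range g).compLeft ℕ
    exact LinearMap.bijective_of_surjective_of_bijective_of_right_exact _ _ _ _ _ _ _
      (compLeft_comp_subSMulShift f _) (compLeft_comp_subSMulShift f _) hexact hexact hM.2 hN
      (Submodule.mkQ_surjective _).comp_left (Submodule.mkQ_surjective _).comp_left
  · have hi' := (LinearMap.exact_zero_iff_injective Unit (i.compLeft ℕ)).2 hi.comp_left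
    have hπ' := (LinearMap.exact_zero_iff_surjective Unit (π.compLeft ℕ)).2 hπ.comp_left
    exact LinearMap.bijective_of_surjective_of_bijective_of_bijective_of_injective
      _ _ _ _ _ _ _ _ (0 : Unit →ₗ[R] Unit) _ _ _ 0 (by simp) (compLeft_comp_subSMulShift f _)
      (compLeft_comp_subSMulShift f _) (by simp) hi' (hiπ.compLeft ℕ) hπ' hi' (hiπ.compLeft ℕ) hπ'
      (fun _ => ⟨(), Subsingleton.elim _ _⟩) hA hC (fun _ _ _ => Subsingleton.elim _ _)
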